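/- Let M₁ and M₂ be real symmetric matrices indexed by a finite type n with decidable equality such that every real eigenvalue of M₁ and every real eigenvalue of M₂ lies in the interval (-1, 1]. Suppose there exists x : n → ℝ with M₁ *ᵥ x = x and M₂ *ᵥ x ≠ x. Then for all matrices P₁ and P₂, if M₁^k converges entrywise to P₁ and M₂^k converges entrywise to P₂ as k → ∞, then P₁ ≠ P₂. -/

import Mathlib

/-! Passing to the limit in `M₁ ^ k *ᵥ x = x` and in `M₂ * M₂ ^ k = M₂ ^ (k + 1)` gives
`P₁ *ᵥ x = x` and `M₂ * P₂ = P₂`; if `P₁ = P₂ = P`, then `M₂ *ᵥ x = M₂ *ᵥ (P *ᵥ x) = P *ᵥ x = x`. -/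

open Matrix Filter Topology

theorem Matrix.tendsto_of_tendsto_apply {ι m n R : Type*} [TopologicalSpace R]
    {A : ι → Matrix m n R} {P : Matrix m n R} {l : Filter ι}
    (h : ∀ i j, Tendsto (fun k => A k i j) l (𝓝 (P i j))) : Tendsto A l (𝓝 P) :=
  tendsto_pi_nhds.2 fun i => tendsto_pi_nhds.2 (h i)

theorem mul_eq_self_of_tendsto_pow {M : Type*} [Monoid M] [TopologicalSpace M] [ContinuousMul M]
    [T2Space M] {a p : M} (h : Tendsto (a ^ ·) atTop (𝓝 p)) : a * p = p := by
  have hmul : Tendsto (fun k => a ^ (k + 1)) atTop (𝓝 (a * p)) := by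
    simpa only [pow_succ'] using h.const_mul a
  exact tendsto_nhds_unique hmul (h.comp (tendsto_add_atTop_nat 1))

section

variable {n R : Type*} [Fintype n] [DecidableEq n] [Semiring R]

theorem Matrix.pow_mulVec_eq_self {M : Matrix n n R} {x : n → R} (hx : M *ᵥ x = x) (k : ℕ) :
    (M ^ k) *ᵥ x = x := by
  induction k with
  | zero => simp
  | succ k ih => rw [pow_succ', ← mulVec_mulVec, ih, hx]

theorem Matrix.mulVec_eq_self_of_tendsto_pow [TopologicalSpace R] [IsTopologicalSemiring R]
    [T2Space R] {M P : Matrix n n R} {x : n → R} (hx : M *ᵥ x = x)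
    (h : Tendsto (M ^ ·) atTop (𝓝 P)) : P *ᵥ x = x := by
  have hlim : Tendsto (fun k => (M ^ k) *ᵥ x) atTop (𝓝 (P *ᵥ x)) :=
    ((continuous_id.matrix_mulVec continuous_const).tendsto P).comp h
  simp only [pow_mulVec_eq_self hx] at hlim
  exact tendsto_nhds_unique hlim tendsto_const_nhds

end

theorem stmt10_general {n : Type} [Fintype n] [DecidableEq n] (M₁ M₂ : Matrix n n ℝ)
    (hx : ∃ x : n → ℝ, M₁ *ᵥ x = x ∧ M₂ *ᵥ x ≠ x) :
    ∀ P₁ P₂ : Matrix n n ℝ,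
      (∀ i j, Tendsto (fun k => (M₁ ^ k) i j) atTop (nhds (P₁ i j))) →
      (∀ i j, Tendsto (fun k => (M₂ ^ k) i j) atTop (nhds (P₂ i j))) →
      P₁ ≠ P₂ := by
  obtain ⟨x, hx₁, hx₂⟩ := hx
  rintro P P₂ h₁ h₂ rfl
  have hPx : P *ᵥ x = x := mulVec_eq_self_of_tendsto_pow hx₁ (tendsto_of_tendsto_apply h₁)
  have hM₂P : M₂ * P = P := mul_eq_self_of_tendsto_pow (tendsto_of_tendsto_apply h₂)
  apply hx₂
  calc M₂ *ᵥ x = (M₂ * P) *ᵥ x := by rw [← mulVec_mulVec, hPx]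
    _ = x := by rw [hM₂P, hPx]

theorem stmt10 {n : Type} [Fintype n] [DecidableEq n] (M₁ M₂ : Matrix n n ℝ)
    (hsymm₁ : M₁ᵀ = M₁) (hsymm₂ : M₂ᵀ = M₂)
    (heig₁ : ∀ (μ : ℝ) (x : n → ℝ), x ≠ 0 → M₁ *ᵥ x = μ • x → -1 < μ ∧ μ ≤ 1)
    (heig₂ : ∀ (μ : ℝ) (x : n → ℝ), x ≠ 0 → M₂ *ᵥ x = μ • x → -1 < μ ∧ μ ≤ 1)
    (hx : ∃ x : n → ℝ, M₁ *ᵥ x = x ∧ M₂ *ᵥ x ≠ x) :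
    ∀ P₁ P₂ : Matrix n n ℝ,
      (∀ i j, Tendsto (fun k => (M₁ ^ k) i j) atTop (nhds (P₁ i j))) →
      (∀ i j, Tendsto (fun k => (M₂ ^ k) i j) atTop (nhds (P₂ i j))) →
      P₁ ≠ P₂ :=
  stmt10_general M₁ M₂ hx
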